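/- Let σ ∈ C¹(Ω, Ω) be a measure-preserving reversibility of ż = F(z) on Ω ⊆ ℝⁿ. If z ∈ Ω is a regular point (F(z) ≠ 0) fixed by σ (σ(z) = z), then div F(z) = 0. -/

import Mathlib

/-!
Differentiating the reversibility relation `φ t (σ w) = σ (φ (-t) w)` at `t = 0` gives
`Dσ(w) F(w) = -F(σ w)`: the involution `σ` pushes `F` forward to `-F`. Since `σ` preserves
volume on `Ω`, the substitution `x = σ y` in the integration by parts identity
`∫ ψ div F = -∫ dψ(F)` (for the test function `ψ = g ∘ σ`) shows that `div F ∘ σ = -div F`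
weakly, hence pointwise on `Ω` by continuity. At a fixed point of `σ` this forces `div F = 0`.
-/

open MeasureTheory Set Function Filter Topology

theorem integral_fderiv_apply_eq_zero {E G : Type*} [NormedAddCommGroup E] [NormedSpace ℝ E]
    [FiniteDimensional ℝ E] [MeasurableSpace E] [BorelSpace E] [NormedAddCommGroup G]
    [NormedSpace ℝ G] (μ : Measure E) [μ.IsAddHaarMeasure] {g : E → G} (hg : ContDiff ℝ 1 g)
    (hsupp : HasCompactSupport g) (v : E) :
    ∫ x, fderiv ℝ g x v ∂μ = 0 := by
  have := integral_smul_fderiv_eq_neg_fderiv_smul_of_integrable (μ := μ) (v := v)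
    (f := fun _ ↦ (1 : ℝ)) (g := g) (by simp)
    (by simpa using ((hg.continuous_fderiv one_ne_zero).clm_apply continuous_const)
      |>.integrable_of_hasCompactSupport (hsupp.fderiv_apply ℝ v))
    (by simpa using hg.continuous.integrable_of_hasCompactSupport hsupp)
    (fun _ _ ↦ differentiableAt_const _) (fun x _ ↦ hg.differentiable one_ne_zero x)
  simpa using this

theorem IsOpen.indicator_eventuallyEq {α β : Type*} [TopologicalSpace α] [Zero β] {Ω : Set α}
    (hΩ : IsOpen Ω) (f : α → β) {x : α} (hx : x ∈ Ω) : Ω.indicator f =ᶠ[𝓝 x] f :=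
  eventually_of_mem (hΩ.mem_nhds hx) fun _ hy ↦ indicator_of_mem hy f

theorem tsupport_indicator_subset_of_inter_support_subset {α β : Type*} [TopologicalSpace α]
    [Zero β] {f : α → β} {Ω K : Set α} (hK : IsClosed K) (hfK : Ω ∩ support f ⊆ K) :
    tsupport (Ω.indicator f) ⊆ K :=
  closure_minimal (by rwa [support_indicator]) hK

theorem ContDiffOn.contDiff_indicator {E F : Type*} [NormedAddCommGroup E] [NormedSpace ℝ E]
    [NormedAddCommGroup F] [NormedSpace ℝ F] {k : WithTop ℕ∞} {f : E → F} {Ω : Set E}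
    (hf : ContDiffOn ℝ k f Ω) (hΩ : IsOpen Ω) (hsupp : tsupport (Ω.indicator f) ⊆ Ω) :
    ContDiff ℝ k (Ω.indicator f) := by
  refine contDiff_iff_contDiffAt.2 fun x ↦ ?_
  by_cases hx : x ∈ Ω
  · exact (hf.contDiffAt (hΩ.mem_nhds hx)).congr_of_eventuallyEq (hΩ.indicator_eventuallyEq f hx)
  · exact contDiffAt_const.congr_of_eventuallyEq
      (notMem_tsupport_iff_eventuallyEq.1 fun h ↦ hx (hsupp h))

theorem ContinuousOn.integrableOn_of_support_subset_isCompact {X E : Type*} [TopologicalSpace X]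
    [T2Space X] [MeasurableSpace X] [OpensMeasurableSpace X] [NormedAddCommGroup E]
    {μ : Measure X} [IsFiniteMeasureOnCompacts μ] {f : X → E} {Ω K : Set X}
    (hf : ContinuousOn f Ω) (hΩ : MeasurableSet Ω) (hK : IsCompact K) (hKΩ : K ⊆ Ω)
    (hfK : support f ⊆ K) : IntegrableOn f Ω μ :=
  ((hf.mono hKΩ).integrableOn_compact hK).of_forall_sdiff_eq_zero hΩ
    fun _ hx ↦ notMem_support.1 fun h ↦ hx.2 (hfK h)

theorem fderiv_apply_eq_neg_of_reverses {E : Type*} [NormedAddCommGroup E] [NormedSpace ℝ E]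
    {φ : ℝ → E → E} {F σ : E → E} {w : E} (hσ : DifferentiableAt ℝ σ w) (hφ0 : φ 0 w = w)
    (hw : HasDerivAt (fun t ↦ φ t w) (F w) 0) (hσw : HasDerivAt (fun t ↦ φ t (σ w)) (F (σ w)) 0)
    (hrev : ∀ t, φ t (σ w) = σ (φ (-t) w)) :
    fderiv ℝ σ w (F w) = -F (σ w) := by
  have hback : HasDerivAt (fun t ↦ φ (-t) w) (-F w) 0 := by
    simpa [Function.comp_def] using hw.scomp_of_eq 0 (hasDerivAt_neg 0) neg_zero.symm
  have hσback : HasDerivAt (fun t ↦ σ (φ (-t) w)) (fderiv ℝ σ w (-F w)) 0 :=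
    hσ.hasFDerivAt.comp_hasDerivAt_of_eq 0 hback (by rw [neg_zero, hφ0])
  have hfwd : HasDerivAt (fun t ↦ σ (φ (-t) w)) (F (σ w)) 0 := by
    simpa only [hrev] using hσw
  rw [← neg_neg (fderiv ℝ σ w (F w)), ← map_neg, hfwd.unique hσback]

theorem MeasureTheory.Measure.map_restrict_eq_self_of_leftInvOn {α : Type*} [MeasurableSpace α]
    {μ : Measure α} {Ω : Set α} {σ : α → α} (hΩ : MeasurableSet Ω)
    (hσ : AEMeasurable σ (μ.restrict Ω)) (hmaps : MapsTo σ Ω Ω) (hinv : LeftInvOn σ σ Ω)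
    (hmeas : ∀ A ⊆ Ω, MeasurableSet A → μ (σ '' A) = μ A) :
    (μ.restrict Ω).map σ = μ.restrict Ω := by
  ext B hB
  have hpre : σ ⁻¹' B ∩ Ω = σ '' (B ∩ Ω) := by
    ext x
    refine ⟨fun ⟨hxB, hx⟩ ↦ ⟨σ x, ⟨hxB, hmaps hx⟩, hinv hx⟩, ?_⟩
    rintro ⟨y, ⟨hyB, hy⟩, rfl⟩
    exact ⟨by rwa [mem_preimage, hinv hy], hmaps hy⟩
  rw [Measure.map_apply_of_aemeasurable hσ hB, Measure.restrict_apply' hΩ,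
    Measure.restrict_apply' hΩ, hpre, hmeas _ inter_subset_right (hB.inter hΩ)]

section Divergence

variable {ι : Type*} [Fintype ι] [DecidableEq ι]

noncomputable def divergence (F : (ι → ℝ) → ι → ℝ) (x : ι → ℝ) : ℝ :=
  ∑ i, fderiv ℝ F x (Pi.single i 1) i

theorem Filter.EventuallyEq.divergence_eq {F G : (ι → ℝ) → ι → ℝ} {x : ι → ℝ}
    (h : F =ᶠ[𝓝 x] G) : divergence F x = divergence G x := by
  simp only [divergence, h.fderiv_eq]

theorem divergence_of_notMem_tsupport {F : (ι → ℝ) → ι → ℝ} {x : ι → ℝ} (hx : x ∉ tsupport F) :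
    divergence F x = 0 := by
  simp [divergence, fderiv_of_notMem_tsupport ℝ hx]

theorem divergence_smul {ψ : (ι → ℝ) → ℝ} {F : (ι → ℝ) → ι → ℝ} {x : ι → ℝ}
    (hψ : DifferentiableAt ℝ ψ x) (hF : DifferentiableAt ℝ F x) :
    divergence (fun y ↦ ψ y • F y) x = ψ x * divergence F x + fderiv ℝ ψ x (F x) := by
  conv_rhs => rw [pi_eq_sum_univ' (F x)]
  unfold divergence
  rw [fderiv_fun_smul hψ hF]
  simp [Finset.sum_add_distrib, Finset.mul_sum, mul_comm]

theorem ContDiffOn.continuousOn_divergence {F : (ι → ℝ) → ι → ℝ} {Ω : Set (ι → ℝ)}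
    (hF : ContDiffOn ℝ 1 F Ω) (hΩ : IsOpen Ω) : ContinuousOn (divergence F) Ω :=
  continuousOn_finsetSum _ fun i _ ↦ (continuous_apply i).comp_continuousOn
    ((hF.continuousOn_fderiv_of_isOpen hΩ le_rfl).clm_apply continuousOn_const)

theorem integral_divergence_eq_zero {V : (ι → ℝ) → ι → ℝ} (hV : ContDiff ℝ 1 V)
    (hsupp : HasCompactSupport V) : ∫ x, divergence V x = 0 := by
  have hint (i : ι) : Integrable fun x ↦ fderiv ℝ V x (Pi.single i 1) :=
    ((hV.continuous_fderiv one_ne_zero).clm_apply continuous_const).integrable_of_hasCompactSupport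
      (hsupp.fderiv_apply ℝ _)
  unfold divergence
  rw [integral_finsetSum _ fun i _ ↦ (hint i).eval i]
  refine Finset.sum_eq_zero fun i _ ↦ ?_
  rw [← eval_integral (hint i).eval, integral_fderiv_apply_eq_zero volume hV hsupp, Pi.zero_apply]

theorem setIntegral_mul_divergence_add_fderiv_eq_zero {Ω K : Set (ι → ℝ)} (hΩ : IsOpen Ω)
    (hK : IsCompact K) (hKΩ : K ⊆ Ω) {F : (ι → ℝ) → ι → ℝ} (hF : ContDiffOn ℝ 1 F Ω)
    {ψ : (ι → ℝ) → ℝ} (hψ : ContDiffOn ℝ 1 ψ Ω) (hψK : Ω ∩ support ψ ⊆ K) :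
    ∫ x in Ω, ψ x * divergence F x + fderiv ℝ ψ x (F x) = 0 := by
  set V := Ω.indicator fun y ↦ ψ y • F y
  have hVK : tsupport V ⊆ K := tsupport_indicator_subset_of_inter_support_subset hK.isClosed
    ((inter_subset_inter_right _ (support_smul_subset_left _ _)).trans hψK)
  have hV : ContDiff ℝ 1 V := (hψ.smul hF).contDiff_indicator hΩ (hVK.trans hKΩ)
  have hdiv : EqOn (divergence V) (fun x ↦ ψ x * divergence F x + fderiv ℝ ψ x (F x)) Ω :=
    fun x hx ↦ by
      rw [(hΩ.indicator_eventuallyEq _ hx).divergence_eq]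
      exact divergence_smul ((hψ.differentiableOn one_ne_zero).differentiableAt (hΩ.mem_nhds hx))
        ((hF.differentiableOn one_ne_zero).differentiableAt (hΩ.mem_nhds hx))
  rw [← setIntegral_congr_fun hΩ.measurableSet hdiv,
    setIntegral_eq_integral_of_forall_compl_eq_zero fun x hx ↦
      divergence_of_notMem_tsupport fun h ↦ hx (hKΩ (hVK h)),
    integral_divergence_eq_zero hV (hK.of_isClosed_subset (isClosed_tsupport V) hVK)]

variable {Ω : Set (ι → ℝ)} {F σ : (ι → ℝ) → ι → ℝ} {g : (ι → ℝ) → ℝ}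

theorem setIntegral_mul_divergence_comp_sub_fderiv_eq_zero (hΩ : IsOpen Ω)
    (hF : ContDiffOn ℝ 1 F Ω) (hσ : ContDiffOn ℝ 1 σ Ω) (hmaps : MapsTo σ Ω Ω)
    (hinv : LeftInvOn σ σ Ω) (hpush : ∀ w ∈ Ω, fderiv ℝ σ w (F w) = -F (σ w))
    (hmap : (volume.restrict Ω).map σ = volume.restrict Ω) (hg : ContDiff ℝ 1 g)
    (hgc : HasCompactSupport g) (hgΩ : tsupport g ⊆ Ω) :
    ∫ x in Ω, g x * divergence F (σ x) - fderiv ℝ g x (F x) = 0 := by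
  have hψ : ContDiffOn ℝ 1 (g ∘ σ) Ω := hg.comp_contDiffOn hσ
  have hψK : Ω ∩ support (g ∘ σ) ⊆ σ '' tsupport g :=
    fun y ⟨hy, hgy⟩ ↦ ⟨σ y, subset_tsupport g hgy, hinv hy⟩
  have hibp := setIntegral_mul_divergence_add_fderiv_eq_zero hΩ
    (hgc.image_of_continuousOn (hσ.continuousOn.mono hgΩ)) (hmaps.mono_left hgΩ).image_subset
    hF hψ hψK
  have hcont : ContinuousOn
      (fun x ↦ (g ∘ σ) x * divergence F x + fderiv ℝ (g ∘ σ) x (F x)) Ω :=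
    (hψ.continuousOn.mul (hF.continuousOn_divergence hΩ)).add
      ((hψ.continuousOn_fderiv_of_isOpen hΩ le_rfl).clm_apply hF.continuousOn)
  have hσm : AEMeasurable σ (volume.restrict Ω) := hσ.continuousOn.aemeasurable hΩ.measurableSet
  calc ∫ x in Ω, g x * divergence F (σ x) - fderiv ℝ g x (F x)
      = ∫ x in Ω, (g ∘ σ) (σ x) * divergence F (σ x) + fderiv ℝ (g ∘ σ) (σ x) (F (σ x)) := by
        refine setIntegral_congr_fun hΩ.measurableSet fun x hx ↦ ?_
        have hσx : σ x ∈ Ω := hmaps hx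
        rw [fderiv_comp (σ x) (hg.differentiable one_ne_zero _)
          ((hσ.differentiableOn one_ne_zero).differentiableAt (hΩ.mem_nhds hσx))]
        simp only [comp_apply, ContinuousLinearMap.comp_apply, hpush _ hσx, hinv hx, map_neg]
        ring
    _ = ∫ y, (g ∘ σ) y * divergence F y + fderiv ℝ (g ∘ σ) y (F y) ∂(volume.restrict Ω).map σ :=
        (integral_map hσm (hmap ▸ hcont.aestronglyMeasurable hΩ.measurableSet)).symm
    _ = 0 := by rw [hmap, hibp]

theorem integral_smul_divergence_comp_add_divergence_eq_zero (hΩ : IsOpen Ω)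
    (hF : ContDiffOn ℝ 1 F Ω) (hσ : ContDiffOn ℝ 1 σ Ω) (hmaps : MapsTo σ Ω Ω)
    (hinv : LeftInvOn σ σ Ω) (hpush : ∀ w ∈ Ω, fderiv ℝ σ w (F w) = -F (σ w))
    (hmap : (volume.restrict Ω).map σ = volume.restrict Ω) (hg : ContDiff ℝ 1 g)
    (hgc : HasCompactSupport g) (hgΩ : tsupport g ⊆ Ω) :
    ∫ x, g x • (divergence F (σ x) + divergence F x) = 0 := by
  have hdivF := hF.continuousOn_divergence hΩ
  have hdg : ContinuousOn (fun x ↦ fderiv ℝ g x (F x)) Ω :=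
    (hg.continuous_fderiv one_ne_zero).continuousOn.clm_apply hF.continuousOn
  have hsupp {f : (ι → ℝ) → ℝ} (hf : ∀ x, g x = 0 → fderiv ℝ g x = 0 → f x = 0) :
      support f ⊆ tsupport g := fun x hx ↦ by
    by_contra hxg
    exact hx (hf x (image_eq_zero_of_notMem_tsupport hxg) (fderiv_of_notMem_tsupport ℝ hxg))
  have hint_comp : IntegrableOn (fun x ↦ g x * divergence F (σ x) - fderiv ℝ g x (F x)) Ω :=
    ((hg.continuous.continuousOn.mul (hdivF.comp hσ.continuousOn hmaps)).sub hdg)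
      |>.integrableOn_of_support_subset_isCompact hΩ.measurableSet hgc hgΩ
        (hsupp fun x hgx hdgx ↦ by simp [hgx, hdgx])
  have hint : IntegrableOn (fun x ↦ g x * divergence F x + fderiv ℝ g x (F x)) Ω :=
    ((hg.continuous.continuousOn.mul hdivF).add hdg)
      |>.integrableOn_of_support_subset_isCompact hΩ.measurableSet hgc hgΩ
        (hsupp fun x hgx hdgx ↦ by simp [hgx, hdgx])
  calc ∫ x, g x • (divergence F (σ x) + divergence F x)
      = ∫ x in Ω, g x • (divergence F (σ x) + divergence F x) :=
        (setIntegral_eq_integral_of_forall_compl_eq_zero fun x hx ↦ by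
          simp [image_eq_zero_of_notMem_tsupport fun h ↦ hx (hgΩ h)]).symm
    _ = ∫ x in Ω, (g x * divergence F (σ x) - fderiv ℝ g x (F x)) +
          (g x * divergence F x + fderiv ℝ g x (F x)) :=
        setIntegral_congr_fun hΩ.measurableSet fun x _ ↦ by simp only [smul_eq_mul]; ring
    _ = 0 := by
      rw [integral_add hint_comp hint,
        setIntegral_mul_divergence_comp_sub_fderiv_eq_zero hΩ hF hσ hmaps hinv hpush hmap hg hgc
          hgΩ,
        setIntegral_mul_divergence_add_fderiv_eq_zero hΩ hgc hgΩ hF hg.contDiffOn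
          (inter_subset_right.trans (subset_tsupport g)), add_zero]

theorem divergence_comp_add_divergence_eq_zero (hΩ : IsOpen Ω)
    (hF : ContDiffOn ℝ 1 F Ω) (hσ : ContDiffOn ℝ 1 σ Ω) (hmaps : MapsTo σ Ω Ω)
    (hinv : LeftInvOn σ σ Ω) (hpush : ∀ w ∈ Ω, fderiv ℝ σ w (F w) = -F (σ w))
    (hmap : (volume.restrict Ω).map σ = volume.restrict Ω) :
    EqOn (fun x ↦ divergence F (σ x) + divergence F x) 0 Ω := by
  have hdivF := hF.continuousOn_divergence hΩ
  have hcont : ContinuousOn (fun x ↦ divergence F (σ x) + divergence F x) Ω :=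
    (hdivF.comp hσ.continuousOn hmaps).add hdivF
  have hae := hΩ.ae_eq_zero_of_integral_contDiff_smul_eq_zero
    (hcont.locallyIntegrableOn hΩ.measurableSet) fun g hg hgc hgΩ ↦
      integral_smul_divergence_comp_add_divergence_eq_zero hΩ hF hσ hmaps hinv hpush hmap
        (hg.of_le (mod_cast le_top)) hgc hgΩ
  exact Measure.eqOn_open_of_ae_eq ((ae_restrict_iff' hΩ.measurableSet).2 hae) hΩ hcont
    continuousOn_const

end Divergence

theorem divergence_zero_at_regular_fixed_point_general {n : ℕ} (Ω : Set (Fin n → ℝ))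
    (hΩ : IsOpen Ω)
    (F : (Fin n → ℝ) → (Fin n → ℝ)) (hF : ContDiffOn ℝ 1 F Ω)
    (φ : ℝ → (Fin n → ℝ) → (Fin n → ℝ))
    (hφ0 : ∀ z ∈ Ω, φ 0 z = z)
    (hderiv : ∀ z ∈ Ω, ∀ t : ℝ, HasDerivAt (fun u => φ u z) (F (φ t z)) t)
    (σ : (Fin n → ℝ) → (Fin n → ℝ)) (hσC1 : ContDiffOn ℝ 1 σ Ω)
    (hmaps : Set.MapsTo σ Ω Ω) (hσinv : ∀ z ∈ Ω, σ (σ z) = z)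
    (hrev : ∀ (t : ℝ), ∀ z ∈ Ω, φ t (σ z) = σ (φ (-t) z))
    (hmeas : ∀ A ⊆ Ω, MeasurableSet A → volume (σ '' A) = volume A)
    (z : Fin n → ℝ) (hz : z ∈ Ω) (hfix : σ z = z) :
    ∑ i : Fin n, fderiv ℝ F z (Pi.single i 1) i = 0 := by
  have hflow (w) (hw : w ∈ Ω) : HasDerivAt (fun t ↦ φ t w) (F w) 0 := by
    simpa only [hφ0 w hw] using hderiv w hw 0
  have hpush (w) (hw : w ∈ Ω) : fderiv ℝ σ w (F w) = -F (σ w) :=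
    fderiv_apply_eq_neg_of_reverses
      ((hσC1.differentiableOn one_ne_zero).differentiableAt (hΩ.mem_nhds hw)) (hφ0 w hw)
      (hflow w hw) (hflow (σ w) (hmaps hw)) (hrev · w hw)
  have hmap : (volume.restrict Ω).map σ = volume.restrict Ω :=
    Measure.map_restrict_eq_self_of_leftInvOn hΩ.measurableSet
      (hσC1.continuousOn.aemeasurable hΩ.measurableSet) hmaps (hσinv · ·) hmeas
  have hsum : divergence F (σ z) + divergence F z = 0 :=
    divergence_comp_add_divergence_eq_zero hΩ hF hσC1 hmaps (hσinv · ·) hpush hmap hz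
  rw [hfix] at hsum
  change divergence F z = 0
  linarith

/-- Theorem 1(ii): if σ is a measure-preserving reversibility and z is a
regular σ-fixed point, then div F(z) = 0. -/
theorem divergence_zero_at_regular_fixed_point {n : ℕ} (Ω : Set (Fin n → ℝ))
    (hΩ : IsOpen Ω) (hconn : IsConnected Ω)
    (F : (Fin n → ℝ) → (Fin n → ℝ)) (hF : ContDiffOn ℝ 1 F Ω)
    (φ : ℝ → (Fin n → ℝ) → (Fin n → ℝ))
    (hmem : ∀ (t : ℝ), ∀ z ∈ Ω, φ t z ∈ Ω)
    (hφ0 : ∀ z ∈ Ω, φ 0 z = z)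
    (hgroup : ∀ (s t : ℝ), ∀ z ∈ Ω, φ (s + t) z = φ s (φ t z))
    (hderiv : ∀ z ∈ Ω, ∀ t : ℝ, HasDerivAt (fun u => φ u z) (F (φ t z)) t)
    (σ : (Fin n → ℝ) → (Fin n → ℝ)) (hσC1 : ContDiffOn ℝ 1 σ Ω)
    (hmaps : Set.MapsTo σ Ω Ω) (hσinv : ∀ z ∈ Ω, σ (σ z) = z)
    (hrev : ∀ (t : ℝ), ∀ z ∈ Ω, φ t (σ z) = σ (φ (-t) z))
    (hmeas : ∀ A ⊆ Ω, MeasurableSet A → volume (σ '' A) = volume A)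
    (z : Fin n → ℝ) (hz : z ∈ Ω) (hreg : F z ≠ 0) (hfix : σ z = z) :
    ∑ i : Fin n, fderiv ℝ F z (Pi.single i 1) i = 0 :=
  divergence_zero_at_regular_fixed_point_general Ω hΩ F hF φ hφ0 hderiv σ hσC1 hmaps hσinv hrev
    hmeas z hz hfix
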